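/- Let λ>0, μ>0 and let z, z':[0,∞)→ℂ be measurable with ‖z‖_λ < ∞, ‖z'‖_λ < ∞, and suppose 2μ ≤ λ − μ‖z‖_λ. Let Θ and Θ' be asymptotic characteristics for z and z' respectively with ‖Θ(t,ϑ,ω) − ϑ − ωt‖_λ < ∞ and ‖Θ'(t,ϑ,ω) − ϑ − ωt‖_λ < ∞, let f_∞ be a probability density on the cylinder, and define w(t) := ∫_{[0,2π)×ℝ} e^{iΘ(t,ϑ,ω)} f_∞(ϑ,ω) dϑ dω and w'(t) := ∫_{[0,2π)×ℝ} e^{iΘ'(t,ϑ,ω)} f_∞(ϑ,ω) dϑ dω. Then ‖w − w'‖_λ ≤ (1/2)‖z − z'‖_λ. -/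

import Mathlib

/-!
Since `|e^{ia} - e^{ib}| ≤ |a - b|` and `f` is a probability density, `‖w - w'‖_λ` is at most
`Δ := ‖Θ - Θ'‖_λ`. Subtracting the integral equations of `Θ` and `Θ'` gives
`Δ ≤ μ Δ ‖z‖_λ / (2λ) + μ ‖z - z'‖_λ / λ`, and the smallness condition `2μ ≤ λ - μ‖z‖_λ` turns
this into `Δ ≤ ‖z - z'‖_λ / 2`.

Two measurability facts make this rigorous. The integrand of the characteristic equation is
integrable, because wherever its integral is undefined `Θ` follows the free flow `ϑ + ωt`.
And `Θ(t, ·, ·)` is measurable, being the limit of the Picard iterates of the characteristic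
equation, which converge at the rate `(μ‖z‖_λ/λ)ⁿ / n!`.
-/

open MeasureTheory

noncomputable section

/-- Weighted sup-norm `sup_{t ≥ 0} |z t| e^{l t}` for `z : ℝ → ℂ`. -/
def expNormZ (l : ℝ) (z : ℝ → ℂ) : ℝ :=
  ⨆ t : {t : ℝ // 0 ≤ t}, ‖z t.1‖ * Real.exp (l * t.1)

/-- Finiteness of the weighted sup-norm for `z : ℝ → ℂ`. -/
def ExpBddZ (l : ℝ) (z : ℝ → ℂ) : Prop :=
  BddAbove (Set.range fun t : {t : ℝ // 0 ≤ t} => ‖z t.1‖ * Real.exp (l * t.1))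

/-- Weighted sup-norm `sup_{t ≥ 0, ϑ, ω} |h t ϑ ω| e^{l t}`. -/
def expNormH (l : ℝ) (h : ℝ → ℝ → ℝ → ℂ) : ℝ :=
  ⨆ p : {t : ℝ // 0 ≤ t} × ℝ × ℝ, ‖h p.1.1 p.2.1 p.2.2‖ * Real.exp (l * p.1.1)

/-- Finiteness of the weighted sup-norm for `h`. -/
def ExpBddH (l : ℝ) (h : ℝ → ℝ → ℝ → ℂ) : Prop :=
  BddAbove (Set.range fun p : {t : ℝ // 0 ≤ t} × ℝ × ℝ =>
    ‖h p.1.1 p.2.1 p.2.2‖ * Real.exp (l * p.1.1))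

/-- `Θ` is an asymptotic characteristic for the order parameter `z`, with coupling `μ`:
`Θ(t,ϑ,ω) = ϑ + ωt + μ ∫_t^∞ Im(e^{iΘ(s,ϑ,ω)} conj(z s)) ds` for all `t ≥ 0`. -/
def IsAsymChar (μ : ℝ) (z : ℝ → ℂ) (Θ : ℝ → ℝ → ℝ → ℝ) : Prop :=
  ∀ t : ℝ, 0 ≤ t → ∀ ϑ ω : ℝ,
    Θ t ϑ ω = ϑ + ω * t + μ * ∫ s in Set.Ioi t,
      (Complex.exp (Complex.I * (Θ s ϑ ω : ℂ)) * (starRingEnd ℂ) (z s)).im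

/-- The reference measure on the cylinder `[0, 2π) × ℝ`. -/
def cylMeasure : Measure (ℝ × ℝ) :=
  (volume.restrict (Set.Ico 0 (2 * Real.pi))).prod volume

/-- `f` is a probability density on the cylinder: nonnegative, `2π`-periodic in the
first variable, with total integral one over `[0, 2π) × ℝ`. -/
structure IsCylDensity (f : ℝ → ℝ → ℝ) : Prop where
  nonneg : ∀ ϑ ω : ℝ, 0 ≤ f ϑ ω
  periodic : ∀ ϑ ω : ℝ, f (ϑ + 2 * Real.pi) ω = f ϑ ω
  integrable : Integrable (fun p : ℝ × ℝ => f p.1 p.2) cylMeasure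
  integral_one : (∫ p : ℝ × ℝ, f p.1 p.2 ∂cylMeasure) = 1

/-- The order parameter `w(t) = ∫_{[0,2π)×ℝ} e^{iΘ(t,ϑ,ω)} f(ϑ,ω) dϑ dω`. -/
def orderParam (f : ℝ → ℝ → ℝ) (Θ : ℝ → ℝ → ℝ → ℝ) (t : ℝ) : ℂ :=
  ∫ p : ℝ × ℝ, Complex.exp (Complex.I * (Θ t p.1 p.2 : ℂ)) * (f p.1 p.2 : ℂ) ∂cylMeasure

open Set Filter Topology

section WeightedNorm

variable {l C t : ℝ}

lemma mul_exp_le_iff_le_mul_exp_neg {a : ℝ} :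
    a * Real.exp (l * t) ≤ C ↔ a ≤ C * Real.exp (-l * t) := by
  rw [← le_div_iff₀ (Real.exp_pos _), div_eq_mul_inv, ← Real.exp_neg, neg_mul]

lemma ExpBddZ.norm_le {z : ℝ → ℂ} (hz : ExpBddZ l z) (ht : 0 ≤ t) :
    ‖z t‖ ≤ expNormZ l z * Real.exp (-l * t) :=
  mul_exp_le_iff_le_mul_exp_neg.1 (le_ciSup hz ⟨t, ht⟩)

lemma expBddZ_of_le {z : ℝ → ℂ} (h : ∀ t, 0 ≤ t → ‖z t‖ ≤ C * Real.exp (-l * t)) :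
    ExpBddZ l z :=
  ⟨C, by rintro _ ⟨t, rfl⟩; exact mul_exp_le_iff_le_mul_exp_neg.2 (h t.1 t.2)⟩

lemma expNormZ_le {z : ℝ → ℂ} (h : ∀ t, 0 ≤ t → ‖z t‖ ≤ C * Real.exp (-l * t)) :
    expNormZ l z ≤ C :=
  ciSup_le fun t => mul_exp_le_iff_le_mul_exp_neg.2 (h t.1 t.2)

lemma expNormZ_nonneg (l : ℝ) (z : ℝ → ℂ) : 0 ≤ expNormZ l z :=
  Real.iSup_nonneg fun _ => by positivity

lemma ExpBddZ.sub {z z' : ℝ → ℂ} (hz : ExpBddZ l z) (hz' : ExpBddZ l z') :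
    ExpBddZ l (fun t => z t - z' t) :=
  expBddZ_of_le fun _ ht => (norm_sub_le _ _).trans <| by
    rw [add_mul]; exact add_le_add (hz.norm_le ht) (hz'.norm_le ht)

lemma ExpBddH.norm_le {h : ℝ → ℝ → ℝ → ℂ} (hh : ExpBddH l h) (ht : 0 ≤ t) (ϑ ω : ℝ) :
    ‖h t ϑ ω‖ ≤ expNormH l h * Real.exp (-l * t) :=
  mul_exp_le_iff_le_mul_exp_neg.1 (le_ciSup hh (⟨t, ht⟩, ϑ, ω))

lemma expBddH_of_le {h : ℝ → ℝ → ℝ → ℂ}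
    (hC : ∀ t, 0 ≤ t → ∀ ϑ ω, ‖h t ϑ ω‖ ≤ C * Real.exp (-l * t)) : ExpBddH l h :=
  ⟨C, by rintro _ ⟨p, rfl⟩; exact mul_exp_le_iff_le_mul_exp_neg.2 (hC p.1.1 p.1.2 _ _)⟩

lemma expNormH_le {h : ℝ → ℝ → ℝ → ℂ}
    (hC : ∀ t, 0 ≤ t → ∀ ϑ ω, ‖h t ϑ ω‖ ≤ C * Real.exp (-l * t)) : expNormH l h ≤ C :=
  ciSup_le fun p => mul_exp_le_iff_le_mul_exp_neg.2 (hC p.1.1 p.1.2 _ _)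

lemma expNormH_nonneg (l : ℝ) (h : ℝ → ℝ → ℝ → ℂ) : 0 ≤ expNormH l h :=
  Real.iSup_nonneg fun _ => by positivity

lemma ExpBddH.sub {h h' : ℝ → ℝ → ℝ → ℂ} (hh : ExpBddH l h) (hh' : ExpBddH l h') :
    ExpBddH l (fun t ϑ ω => h t ϑ ω - h' t ϑ ω) :=
  expBddH_of_le fun _ ht ϑ ω => (norm_sub_le _ _).trans <| by
    rw [add_mul]; exact add_le_add (hh.norm_le ht ϑ ω) (hh'.norm_le ht ϑ ω)

end WeightedNorm

lemma integral_exp_neg_mul_Ioi {b : ℝ} (hb : 0 < b) (c : ℝ) :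
    ∫ s in Ioi c, Real.exp (-b * s) = Real.exp (-b * c) / b := by
  rw [integral_exp_mul_Ioi (neg_lt_zero.2 hb), neg_div_neg_eq]

lemma integrableOn_Ioi_of_norm_le_exp {E : Type*} [NormedAddCommGroup E] {g : ℝ → E}
    {t c l : ℝ} (hl : 0 < l) (hg : AEStronglyMeasurable g (volume.restrict (Ioi t)))
    (h : ∀ s ∈ Ioi t, ‖g s‖ ≤ c * Real.exp (-l * s)) : IntegrableOn g (Ioi t) :=
  ((exp_neg_integrableOn_Ioi t hl).const_mul c).mono' hg <|
    (ae_restrict_iff' measurableSet_Ioi).2 (.of_forall h)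

lemma norm_exp_I_mul_sub_le (a b : ℝ) :
    ‖Complex.exp (Complex.I * a) - Complex.exp (Complex.I * b)‖ ≤ |a - b| := by
  have : Complex.exp (Complex.I * a) - Complex.exp (Complex.I * b) =
      Complex.exp (Complex.I * b) * (Complex.exp (Complex.I * ↑(a - b)) - 1) := by
    rw [mul_sub, ← Complex.exp_add]; push_cast; ring_nf
  rw [this, norm_mul, Complex.norm_exp_I_mul_ofReal, one_mul, ← Real.norm_eq_abs]
  exact Real.norm_exp_I_mul_ofReal_sub_one_le

def charIntegrand (z : ℝ → ℂ) (F : ℝ → ℝ) (s : ℝ) : ℝ :=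
  (Complex.exp (Complex.I * (F s : ℂ)) * starRingEnd ℂ (z s)).im

section CharIntegrand

variable {z z' : ℝ → ℂ} {F G : ℝ → ℝ}

lemma abs_charIntegrand_le (s : ℝ) : |charIntegrand z F s| ≤ ‖z s‖ :=
  (Complex.abs_im_le_norm _).trans_eq <| by
    rw [norm_mul, Complex.norm_exp_I_mul_ofReal, Complex.norm_conj, one_mul]

lemma abs_charIntegrand_sub_le (s : ℝ) :
    |charIntegrand z F s - charIntegrand z' G s| ≤ |F s - G s| * ‖z s‖ + ‖z s - z' s‖ := by
  rw [charIntegrand, charIntegrand, ← Complex.sub_im]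
  refine (Complex.abs_im_le_norm _).trans ?_
  have hsplit : Complex.exp (Complex.I * F s) * starRingEnd ℂ (z s) -
        Complex.exp (Complex.I * G s) * starRingEnd ℂ (z' s) =
      (Complex.exp (Complex.I * F s) - Complex.exp (Complex.I * G s)) * starRingEnd ℂ (z s) +
        Complex.exp (Complex.I * G s) * starRingEnd ℂ (z s - z' s) := by
    rw [map_sub]; ring
  rw [hsplit]
  refine (norm_add_le _ _).trans (add_le_add ?_ ?_)
  · rw [norm_mul, Complex.norm_conj]
    exact mul_le_mul_of_nonneg_right (norm_exp_I_mul_sub_le _ _) (norm_nonneg _)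
  · rw [norm_mul, Complex.norm_exp_I_mul_ofReal, Complex.norm_conj, one_mul]

lemma Measurable.charIntegrand (hz : Measurable z) (hF : Measurable F) :
    Measurable (charIntegrand z F) := by
  unfold _root_.charIntegrand; fun_prop

lemma abs_setIntegral_charIntegrand_sub_le {l r t K Kz Kd : ℝ} (hl : 0 < l) (hrl : 0 < r + l)
    (hF : IntegrableOn (charIntegrand z F) (Ioi t))
    (hG : IntegrableOn (charIntegrand z' G) (Ioi t))
    (hFG : ∀ s ∈ Ioi t, |F s - G s| ≤ K * Real.exp (-r * s))
    (hz : ∀ s ∈ Ioi t, ‖z s‖ ≤ Kz * Real.exp (-l * s))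
    (hzz' : ∀ s ∈ Ioi t, ‖z s - z' s‖ ≤ Kd * Real.exp (-l * s)) :
    |(∫ s in Ioi t, charIntegrand z F s) - ∫ s in Ioi t, charIntegrand z' G s| ≤
      K * Kz / (r + l) * Real.exp (-(r + l) * t) + Kd / l * Real.exp (-l * t) := by
  have hdecay₁ := (exp_neg_integrableOn_Ioi t hrl).const_mul (K * Kz)
  have hdecay₂ := (exp_neg_integrableOn_Ioi t hl).const_mul Kd
  have hpointwise : ∀ s ∈ Ioi t, |charIntegrand z F s - charIntegrand z' G s| ≤
      K * Kz * Real.exp (-(r + l) * s) + Kd * Real.exp (-l * s) := by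
    intro s hs
    have hexp : Real.exp (-(r + l) * s) = Real.exp (-r * s) * Real.exp (-l * s) := by
      rw [← Real.exp_add]; ring_nf
    calc |charIntegrand z F s - charIntegrand z' G s|
        ≤ |F s - G s| * ‖z s‖ + ‖z s - z' s‖ := abs_charIntegrand_sub_le s
      _ ≤ K * Real.exp (-r * s) * (Kz * Real.exp (-l * s)) + Kd * Real.exp (-l * s) :=
          add_le_add (mul_le_mul (hFG s hs) (hz s hs) (norm_nonneg _)
            ((abs_nonneg _).trans (hFG s hs))) (hzz' s hs)
      _ = K * Kz * Real.exp (-(r + l) * s) + Kd * Real.exp (-l * s) := by rw [hexp]; ring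
  rw [← integral_sub hF hG]
  calc |∫ s in Ioi t, (charIntegrand z F s - charIntegrand z' G s)|
      ≤ ∫ s in Ioi t, |charIntegrand z F s - charIntegrand z' G s| :=
        abs_integral_le_integral_abs
    _ ≤ ∫ s in Ioi t, (K * Kz * Real.exp (-(r + l) * s) + Kd * Real.exp (-l * s)) :=
        setIntegral_mono_on (hF.sub hG).abs (hdecay₁.add hdecay₂) measurableSet_Ioi hpointwise
    _ = K * Kz / (r + l) * Real.exp (-(r + l) * t) + Kd / l * Real.exp (-l * t) := by
        rw [integral_add hdecay₁ hdecay₂, integral_const_mul, integral_const_mul,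
          integral_exp_neg_mul_Ioi hrl, integral_exp_neg_mul_Ioi hl]
        ring

end CharIntegrand

section Measurability

variable {β : Type*} [TopologicalSpace β] [TopologicalSpace.PseudoMetrizableSpace β]
  {g g₀ : ℝ → β}

lemma aestronglyMeasurable_Ioi_of_forall_gt {a : ℝ}
    (h : ∀ b, a < b → AEStronglyMeasurable g (volume.restrict (Ioi b))) :
    AEStronglyMeasurable g (volume.restrict (Ioi a)) := by
  obtain ⟨u, -, hua, hu⟩ := exists_seq_strictAnti_tendsto a
  have hunion : Ioi a = ⋃ n, Ioi (u n) := by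
    ext x
    simp only [mem_Ioi, mem_iUnion]
    exact ⟨fun hx => (hu.eventually (gt_mem_nhds hx)).exists,
      fun ⟨n, hn⟩ => (hua n).trans hn⟩
  rw [hunion, aestronglyMeasurable_iUnion_iff]
  exact fun n => h _ (hua n)

/-- With `τ` the infimum of the points `a` beyond which `g` is already measurable, `g` agrees
with `g₀` on `(t, τ)`. -/
lemma aestronglyMeasurable_Ioi_of_forall_or {t : ℝ}
    (hg₀ : AEStronglyMeasurable g₀ (volume.restrict (Ioi t)))
    (h : ∀ a, t < a → AEStronglyMeasurable g (volume.restrict (Ioi a)) ∨ g a = g₀ a) :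
    AEStronglyMeasurable g (volume.restrict (Ioi t)) := by
  set S := {a | t < a ∧ AEStronglyMeasurable g (volume.restrict (Ioi a))}
  have heq_of_notMem : ∀ a, t < a → a ∉ S → g a = g₀ a := fun a ha haS =>
    (h a ha).resolve_left fun hm => haS ⟨ha, hm⟩
  rcases S.eq_empty_or_nonempty with hS | hS
  · refine hg₀.congr (ae_restrict_of_forall_mem measurableSet_Ioi fun a ha => ?_)
    exact (heq_of_notMem a ha (hS ▸ notMem_empty a)).symm
  have hbdd : BddBelow S := ⟨t, fun a ha => ha.1.le⟩
  set τ := sInf S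
  have htτ : t ≤ τ := le_csInf hS fun a ha => ha.1.le
  have hτ : AEStronglyMeasurable g (volume.restrict (Ioi τ)) := by
    refine aestronglyMeasurable_Ioi_of_forall_gt fun b hb => ?_
    obtain ⟨c, hcS, hcb⟩ := exists_lt_of_csInf_lt hS hb
    exact hcS.2.mono_measure (Measure.restrict_mono (Ioi_subset_Ioi hcb.le) le_rfl)
  have hbelow : AEStronglyMeasurable g (volume.restrict (Ioc t τ)) := by
    rw [← Measure.restrict_congr_set Ioo_ae_eq_Ioc]
    refine (hg₀.mono_measure (Measure.restrict_mono Ioo_subset_Ioi_self le_rfl)).congr ?_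
    refine ae_restrict_of_forall_mem measurableSet_Ioo fun a ha => ?_
    exact (heq_of_notMem a ha.1 fun haS => (csInf_le hbdd haS).not_gt ha.2).symm
  rw [← Ioc_union_Ioi_eq_Ioi htτ, aestronglyMeasurable_union_iff]
  exact ⟨hbelow, hτ⟩

end Measurability

namespace IsAsymChar

variable {l μ : ℝ} {z : ℝ → ℂ} {Θ : ℝ → ℝ → ℝ → ℝ}

lemma eq_add_setIntegral (hΘ : IsAsymChar μ z Θ) {a : ℝ} (ha : 0 ≤ a) (ϑ ω : ℝ) :
    Θ a ϑ ω = ϑ + ω * a + μ * ∫ s in Ioi a, charIntegrand z (Θ · ϑ ω) s :=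
  hΘ a ha ϑ ω

/-- An integral that is not defined is `0` in Lean, which leaves `Θ` on its free trajectory. -/
lemma integrableOn_or_eq (hΘ : IsAsymChar μ z Θ) {a : ℝ} (ha : 0 ≤ a) (ϑ ω : ℝ) :
    IntegrableOn (charIntegrand z (Θ · ϑ ω)) (Ioi a) ∨ Θ a ϑ ω = ϑ + ω * a := by
  refine or_iff_not_imp_left.2 fun hint => ?_
  have h := hΘ.eq_add_setIntegral ha ϑ ω
  rwa [show (∫ s in Ioi a, charIntegrand z (Θ · ϑ ω) s) = 0 from integral_undef hint,
    mul_zero, add_zero] at h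

lemma integrableOn (hΘ : IsAsymChar μ z Θ) (hl : 0 < l) (hz : Measurable z)
    (hzb : ExpBddZ l z) (ϑ ω : ℝ) {t : ℝ} (ht : 0 ≤ t) :
    IntegrableOn (charIntegrand z (Θ · ϑ ω)) (Ioi t) := by
  have hdecay : ∀ a, 0 ≤ a → ∀ s ∈ Ioi a,
      ‖charIntegrand z (Θ · ϑ ω) s‖ ≤ expNormZ l z * Real.exp (-l * s) := fun a ha s hs =>
    (abs_charIntegrand_le s).trans (hzb.norm_le (ha.trans (le_of_lt hs)))
  have hfree : Measurable (charIntegrand z fun s => ϑ + ω * s) := hz.charIntegrand (by fun_prop)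
  refine integrableOn_Ioi_of_norm_le_exp hl ?_ (hdecay t ht)
  refine aestronglyMeasurable_Ioi_of_forall_or hfree.aestronglyMeasurable fun a ha => ?_
  refine (hΘ.integrableOn_or_eq (ht.trans ha.le) ϑ ω).imp (·.aestronglyMeasurable) fun h => ?_
  simp only [charIntegrand, h]

lemma expNormH_sub_le (hl : 0 < l) (hμ : 0 ≤ μ) {z' : ℝ → ℂ} (hz : Measurable z)
    (hz' : Measurable z') (hzb : ExpBddZ l z) (hz'b : ExpBddZ l z') {Θ' : ℝ → ℝ → ℝ → ℝ}
    (hΘ : IsAsymChar μ z Θ) (hΘ' : IsAsymChar μ z' Θ')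
    (hΔ : ExpBddH l (fun t ϑ ω => ((Θ t ϑ ω - Θ' t ϑ ω : ℝ) : ℂ))) :
    expNormH l (fun t ϑ ω => ((Θ t ϑ ω - Θ' t ϑ ω : ℝ) : ℂ)) ≤
      μ * expNormH l (fun t ϑ ω => ((Θ t ϑ ω - Θ' t ϑ ω : ℝ) : ℂ)) * expNormZ l z / (2 * l) +
        μ * expNormZ l (fun t => z t - z' t) / l := by
  set Δ := expNormH l (fun t ϑ ω => ((Θ t ϑ ω - Θ' t ϑ ω : ℝ) : ℂ))
  refine expNormH_le fun t ht ϑ ω => ?_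
  have hΔt : ∀ s ∈ Ioi t, |Θ s ϑ ω - Θ' s ϑ ω| ≤ Δ * Real.exp (-l * s) := fun s hs => by
    simpa only [Complex.norm_real, Real.norm_eq_abs] using hΔ.norm_le (ht.trans hs.le) ϑ ω
  have hest := abs_setIntegral_charIntegrand_sub_le hl (by linarith)
    (hΘ.integrableOn hl hz hzb ϑ ω ht) (hΘ'.integrableOn hl hz' hz'b ϑ ω ht) hΔt
    (fun s hs => hzb.norm_le (ht.trans hs.le)) (fun s hs => (hzb.sub hz'b).norm_le (ht.trans hs.le))
  have hdecay : Real.exp (-(l + l) * t) ≤ Real.exp (-l * t) :=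
    Real.exp_le_exp.2 (by nlinarith)
  rw [Complex.norm_real, Real.norm_eq_abs, hΘ.eq_add_setIntegral ht, hΘ'.eq_add_setIntegral ht,
    add_sub_add_left_eq_sub, ← mul_sub, abs_mul, abs_of_nonneg hμ]
  calc μ * |(∫ s in Ioi t, charIntegrand z (Θ · ϑ ω) s) -
          ∫ s in Ioi t, charIntegrand z' (Θ' · ϑ ω) s|
      ≤ μ * (Δ * expNormZ l z / (l + l) * Real.exp (-(l + l) * t) +
          expNormZ l (fun t => z t - z' t) / l * Real.exp (-l * t)) :=
        mul_le_mul_of_nonneg_left hest hμ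
    _ ≤ μ * (Δ * expNormZ l z / (l + l) * Real.exp (-l * t) +
          expNormZ l (fun t => z t - z' t) / l * Real.exp (-l * t)) := by
        gcongr
        exact div_nonneg (mul_nonneg (expNormH_nonneg _ _) (expNormZ_nonneg _ _)) (by positivity)
    _ = _ := by ring

end IsAsymChar

lemma le_half_of_le_contraction {l μ N N' Δ : ℝ} (hl : 0 < l) (hμ : 0 ≤ μ) (hN : 0 ≤ N)
    (hN' : 0 ≤ N') (hsmall : 2 * μ ≤ l - μ * N) (h : Δ ≤ μ * Δ * N / (2 * l) + μ * N' / l) :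
    Δ ≤ 1 / 2 * N' := by
  have h2 : Δ * (2 * l - μ * N) ≤ 2 * μ * N' := by
    have := mul_le_mul_of_nonneg_right h (by positivity : (0 : ℝ) ≤ 2 * l)
    field_simp at this
    linarith
  nlinarith [mul_nonneg hμ hN, mul_nonneg hμ hN']

lemma measurable_setIntegral_Ioi {α : Type*} [MeasurableSpace α] {h : α → ℝ → ℝ}
    (hh : Measurable (Function.uncurry h)) {a : α → ℝ} (ha : Measurable a) :
    Measurable fun p => ∫ s in Ioi (a p), h p s := by
  have hind : Measurable (Function.uncurry fun p => (Ioi (a p)).indicator (h p)) :=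
    Measurable.ite (measurableSet_lt (ha.comp measurable_fst) measurable_snd) hh measurable_const
  simp_rw [← integral_indicator measurableSet_Ioi]
  exact hind.stronglyMeasurable.integral_prod_right'.measurable

def picardChar (μ : ℝ) (z : ℝ → ℂ) : ℕ → ℝ → ℝ → ℝ → ℝ
  | 0 => fun t ϑ ω => ϑ + ω * t
  | n + 1 => fun t ϑ ω =>
      ϑ + ω * t + μ * ∫ s in Ioi t, charIntegrand z (picardChar μ z n · ϑ ω) s

lemma measurable_picardChar (μ : ℝ) {z : ℝ → ℂ} (hz : Measurable z) (n : ℕ) :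
    Measurable fun p : ℝ × ℝ × ℝ => picardChar μ z n p.1 p.2.1 p.2.2 := by
  induction n with
  | zero => simp only [picardChar]; fun_prop
  | succ n ih =>
    have hint : Measurable fun p : ℝ × ℝ × ℝ =>
        ∫ s in Ioi p.1, charIntegrand z (picardChar μ z n · p.2.1 p.2.2) s := by
      refine measurable_setIntegral_Ioi ?_ measurable_fst
      have hn : Measurable fun q : (ℝ × ℝ × ℝ) × ℝ => picardChar μ z n q.2 q.1.2.1 q.1.2.2 :=
        ih.comp (f := fun q : (ℝ × ℝ × ℝ) × ℝ => (q.2, q.1.2.1, q.1.2.2)) (by fun_prop)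
      unfold Function.uncurry charIntegrand
      fun_prop
    simp only [picardChar]
    fun_prop

namespace IsAsymChar

variable {l μ : ℝ} {z : ℝ → ℂ} {Θ : ℝ → ℝ → ℝ → ℝ}

lemma abs_picardChar_sub_le (hΘ : IsAsymChar μ z Θ) (hl : 0 < l) (hμ : 0 ≤ μ)
    (hz : Measurable z) (hzb : ExpBddZ l z)
    (hΘb : ExpBddH l (fun t ϑ ω => ((Θ t ϑ ω - ϑ - ω * t : ℝ) : ℂ))) (n : ℕ) {t : ℝ}
    (ht : 0 ≤ t) (ϑ ω : ℝ) :
    |picardChar μ z n t ϑ ω - Θ t ϑ ω| ≤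
      expNormH l (fun t ϑ ω => ((Θ t ϑ ω - ϑ - ω * t : ℝ) : ℂ)) *
        (μ * expNormZ l z / l) ^ n / n.factorial * Real.exp (-((n + 1) * l) * t) := by
  set C := expNormH l (fun t ϑ ω => ((Θ t ϑ ω - ϑ - ω * t : ℝ) : ℂ))
  set a := μ * expNormZ l z / l
  induction n generalizing t with
  | zero =>
    simp only [picardChar, pow_zero, Nat.factorial_zero, Nat.cast_zero, Nat.cast_one, div_one,
      mul_one, zero_add, one_mul]
    rw [abs_sub_comm, ← sub_sub]
    simpa only [Complex.norm_real, Real.norm_eq_abs] using hΘb.norm_le ht ϑ ω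
  | succ n ih =>
    have hmeas : Measurable (picardChar μ z n · ϑ ω) :=
      (measurable_picardChar μ hz n).comp (f := fun s => (s, ϑ, ω)) (by fun_prop)
    have hint : IntegrableOn (charIntegrand z (picardChar μ z n · ϑ ω)) (Ioi t) :=
      integrableOn_Ioi_of_norm_le_exp hl (hz.charIntegrand hmeas).aestronglyMeasurable
        fun s hs => (abs_charIntegrand_le s).trans (hzb.norm_le (ht.trans hs.le))
    have hest := abs_setIntegral_charIntegrand_sub_le (z' := z) (Kd := 0) hl (by positivity)
      hint (hΘ.integrableOn hl hz hzb ϑ ω ht) (fun s hs => ih (ht.trans hs.le))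
      (fun s hs => hzb.norm_le (ht.trans hs.le)) (fun s _ => by simp)
    have hK : 0 ≤ C * a ^ n / n.factorial := by
      have := expNormZ_nonneg l z
      have := expNormH_nonneg l (fun t ϑ ω => ((Θ t ϑ ω - ϑ - ω * t : ℝ) : ℂ))
      positivity
    rw [picardChar, hΘ.eq_add_setIntegral ht, add_sub_add_left_eq_sub, ← mul_sub, abs_mul,
      abs_of_nonneg hμ]
    calc μ * |(∫ s in Ioi t, charIntegrand z (picardChar μ z n · ϑ ω) s) -
          ∫ s in Ioi t, charIntegrand z (Θ · ϑ ω) s|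
        ≤ μ * (C * a ^ n / n.factorial * expNormZ l z / ((n + 1) * l + l) *
            Real.exp (-((n + 1) * l + l) * t) + 0 / l * Real.exp (-l * t)) :=
          mul_le_mul_of_nonneg_left hest hμ
      _ = C * a ^ n / n.factorial * a / (n + 2) * Real.exp (-((n + 1 + 1) * l) * t) := by
          simp only [a]
          field_simp
          ring
      _ ≤ C * a ^ n / n.factorial * a / (n + 1) * Real.exp (-((n + 1 + 1) * l) * t) := by
          have : 0 ≤ a := by have := expNormZ_nonneg l z; positivity
          gcongr
          linarith
      _ = C * a ^ (n + 1) / (n + 1).factorial * Real.exp (-((↑(n + 1) + 1) * l) * t) := by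
          rw [Nat.factorial_succ]
          push_cast
          field_simp
          ring

lemma tendsto_picardChar (hΘ : IsAsymChar μ z Θ) (hl : 0 < l) (hμ : 0 ≤ μ)
    (hz : Measurable z) (hzb : ExpBddZ l z)
    (hΘb : ExpBddH l (fun t ϑ ω => ((Θ t ϑ ω - ϑ - ω * t : ℝ) : ℂ))) {t : ℝ} (ht : 0 ≤ t)
    (ϑ ω : ℝ) : Tendsto (picardChar μ z · t ϑ ω) atTop (𝓝 (Θ t ϑ ω)) := by
  set C := expNormH l (fun t ϑ ω => ((Θ t ϑ ω - ϑ - ω * t : ℝ) : ℂ))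
  set a := μ * expNormZ l z / l
  have hC : 0 ≤ C := expNormH_nonneg _ _
  have ha : 0 ≤ a := by have := expNormZ_nonneg l z; positivity
  have hbound : ∀ n : ℕ, |picardChar μ z n t ϑ ω - Θ t ϑ ω| ≤ C * (a ^ n / n.factorial) :=
    fun n => (hΘ.abs_picardChar_sub_le hl hμ hz hzb hΘb n ht ϑ ω).trans <| by
      rw [← mul_div_assoc]
      have : 0 ≤ (n + 1) * l * t := mul_nonneg (mul_nonneg (by positivity) hl.le) ht
      exact mul_le_of_le_one_right (by positivity) (Real.exp_le_one_iff.2 (by linarith))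
  have hlim : Tendsto (fun n : ℕ => C * (a ^ n / n.factorial)) atTop (𝓝 0) := by
    simpa using (FloorSemiring.tendsto_pow_div_factorial_atTop a).const_mul C
  rw [tendsto_iff_norm_sub_tendsto_zero]
  exact squeeze_zero (fun _ => norm_nonneg _) hbound hlim

/-- `Θ` itself is not assumed measurable; it is the pointwise limit of measurable iterates. -/
lemma measurable_slice (hΘ : IsAsymChar μ z Θ) (hl : 0 < l) (hμ : 0 ≤ μ)
    (hz : Measurable z) (hzb : ExpBddZ l z)
    (hΘb : ExpBddH l (fun t ϑ ω => ((Θ t ϑ ω - ϑ - ω * t : ℝ) : ℂ))) {t : ℝ} (ht : 0 ≤ t) :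
    Measurable fun p : ℝ × ℝ => Θ t p.1 p.2 :=
  measurable_of_tendsto_metrizable
    (fun n => (measurable_picardChar μ hz n).comp (f := fun p : ℝ × ℝ => (t, p)) (by fun_prop))
    (tendsto_pi_nhds.2 fun p => hΘ.tendsto_picardChar hl hμ hz hzb hΘb ht p.1 p.2)

end IsAsymChar

lemma integrable_orderParam_integrand {f : ℝ → ℝ → ℝ} (hf : IsCylDensity f)
    {Θ : ℝ → ℝ → ℝ → ℝ} {t : ℝ} (hΘ : Measurable fun p : ℝ × ℝ => Θ t p.1 p.2) :
    Integrable (fun p : ℝ × ℝ => Complex.exp (Complex.I * (Θ t p.1 p.2 : ℂ)) * (f p.1 p.2 : ℂ))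
      cylMeasure := by
  refine hf.integrable.mono' ?_ (.of_forall fun p => ?_)
  · exact (by fun_prop : Measurable fun p : ℝ × ℝ => Complex.exp (Complex.I * (Θ t p.1 p.2 : ℂ)))
      |>.aestronglyMeasurable.mul (Complex.continuous_ofReal.comp_aestronglyMeasurable
        hf.integrable.aestronglyMeasurable)
  · rw [norm_mul, Complex.norm_exp_I_mul_ofReal, one_mul, Complex.norm_real, Real.norm_eq_abs,
      abs_of_nonneg (hf.nonneg p.1 p.2)]

lemma norm_orderParam_sub_le {f : ℝ → ℝ → ℝ} (hf : IsCylDensity f) {Θ Θ' : ℝ → ℝ → ℝ → ℝ}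
    {t c : ℝ} (hΘ : Measurable fun p : ℝ × ℝ => Θ t p.1 p.2)
    (hΘ' : Measurable fun p : ℝ × ℝ => Θ' t p.1 p.2) (h : ∀ ϑ ω, |Θ t ϑ ω - Θ' t ϑ ω| ≤ c) :
    ‖orderParam f Θ t - orderParam f Θ' t‖ ≤ c := by
  rw [orderParam, orderParam, ← integral_sub (integrable_orderParam_integrand hf hΘ)
    (integrable_orderParam_integrand hf hΘ')]
  calc _ ≤ ∫ p, c * f p.1 p.2 ∂cylMeasure := by
        refine norm_integral_le_of_norm_le (hf.integrable.const_mul c) (.of_forall fun p => ?_)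
        rw [← sub_mul, norm_mul, Complex.norm_real, Real.norm_eq_abs,
          abs_of_nonneg (hf.nonneg p.1 p.2)]
        exact mul_le_mul_of_nonneg_right ((norm_exp_I_mul_sub_le _ _).trans (h p.1 p.2))
          (hf.nonneg p.1 p.2)
    _ = c := by rw [integral_const_mul, hf.integral_one, mul_one]

/-- The iteration map is a `1/2`-contraction when `2μ ≤ λ - μ‖z‖_λ`. -/
theorem orderParam_half_contraction_exp
    (l μ : ℝ) (hl : 0 < l) (hμ : 0 < μ) (z z' : ℝ → ℂ)
    (hz : Measurable z) (hz' : Measurable z')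
    (hzb : ExpBddZ l z) (hz'b : ExpBddZ l z')
    (hsmall : 2 * μ ≤ l - μ * expNormZ l z)
    (Θ Θ' : ℝ → ℝ → ℝ → ℝ) (hΘ : IsAsymChar μ z Θ) (hΘ' : IsAsymChar μ z' Θ')
    (hΘb : ExpBddH l (fun t ϑ ω => ((Θ t ϑ ω - ϑ - ω * t : ℝ) : ℂ)))
    (hΘ'b : ExpBddH l (fun t ϑ ω => ((Θ' t ϑ ω - ϑ - ω * t : ℝ) : ℂ)))
    (f : ℝ → ℝ → ℝ) (hf : IsCylDensity f) :
    expNormZ l (fun t => orderParam f Θ t - orderParam f Θ' t) ≤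
      (1 / 2) * expNormZ l (fun t => z t - z' t) := by
  have hΔ : ExpBddH l (fun t ϑ ω => ((Θ t ϑ ω - Θ' t ϑ ω : ℝ) : ℂ)) := by
    convert hΘb.sub hΘ'b using 1
    funext t ϑ ω
    push_cast
    ring
  have hhalf := le_half_of_le_contraction hl hμ.le (expNormZ_nonneg l z)
    (expNormZ_nonneg l _) hsmall (hΘ.expNormH_sub_le hl hμ.le hz hz' hzb hz'b hΘ' hΔ)
  refine expNormZ_le fun t ht => norm_orderParam_sub_le hf
    (hΘ.measurable_slice hl hμ.le hz hzb hΘb ht) (hΘ'.measurable_slice hl hμ.le hz' hz'b hΘ'b ht)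
    fun ϑ ω => ?_
  calc |Θ t ϑ ω - Θ' t ϑ ω|
      ≤ expNormH l (fun t ϑ ω => ((Θ t ϑ ω - Θ' t ϑ ω : ℝ) : ℂ)) * Real.exp (-l * t) := by
        simpa only [Complex.norm_real, Real.norm_eq_abs] using hΔ.norm_le ht ϑ ω
    _ ≤ 1 / 2 * expNormZ l (fun t => z t - z' t) * Real.exp (-l * t) := by gcongr
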